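/- Let p be prime and let F(t) ∈ \bar{F}_p((t^ℚ)) be a generalized Laurent series. Then F can be written uniquely as F = F₋ + c + F₊ where c ∈ \bar{F}_p is a constant, F₊ has support contained in ℚ_{>0}, and F₋ has support contained in ℚ_{<0}. Moreover, given such a decomposition, every solution G in \bar{F}_p((t^ℚ)) of the equation G^p − G = −F has the form G = G₊ + G₋ + a + i, where i ∈ F_p, a ∈ \bar{F}_p satisfies a^p − a = −c, G₊ = F₊(t) + F₊(t)^p + F₊(t)^{p^2} + ⋯ (a convergent sum in the positive-support part), and G₋ = −F₋(t)^{1/p} − F₋(t)^{1/p^2} − ⋯. -/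

import Mathlib

/-!
On Hahn series over a field of characteristic `p` the Frobenius acts coefficientwise as
`(x ^ p).coeff b = (x.coeff (b / p)) ^ p`. So the geometric-type sums `∑ F₊ ^ p ^ j` and
`∑ F₋ ^ (1 / p ^ j)` are summable (only finitely many of their supports reach below any given
exponent of the relevant sign, since `p ^ j` grows) and telescope under `G ↦ G ^ p - G`.
The difference `H` of two solutions satisfies `H ^ p - H ∈ C K`, which makes its support away
from `0` stable under `b ↦ p * b` and `b ↦ b / p`; a well-ordered set has no such nonzero
elements, so `H` is a constant.
-/

open Set HahnSeries

theorem finsum_nat_eq_add_finsum_succ {M : Type*} [AddCommMonoid M] {f : ℕ → M}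
    (hf : f.support.Finite) : ∑ᶠ i, f i = f 0 + ∑ᶠ i, f (i + 1) := by
  rw [← add_finsum_cond_ne 0 hf, ← finsum_mem_range (f := f) Nat.succ_injective, Nat.range_succ]
  simp only [mem_ofPred_eq, Nat.pos_iff_ne_zero]

theorem finite_setOf_pow_le {α : Type*} [Ring α] [LinearOrder α] [IsStrictOrderedRing α]
    [Archimedean α] {r : α} (hr : 1 < r) (C : α) : {n : ℕ | r ^ n ≤ C}.Finite := by
  obtain ⟨N, hN⟩ := pow_unbounded_of_one_lt C hr
  exact (finite_Iio N).subset fun n hn =>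
    lt_of_not_ge fun h => (hN.trans_le (pow_le_pow_right₀ hr.le h)).not_ge hn

theorem Set.isWF_iUnion_of_finite_setOf_le {ι α : Type*} [Preorder α] {S : ι → Set α}
    (hS : ∀ i, (S i).IsWF) (hfin : ∀ i, ∀ g ∈ S i, {j | ∃ a ∈ S j, a ≤ g}.Finite) :
    (⋃ i, S i).IsWF := by
  rw [isWF_iff_no_descending_seq]
  intro f hf hmem
  obtain ⟨i, hi⟩ := mem_iUnion.1 (hmem 0)
  have hsub : ∀ n, f n ∈ ⋃ j ∈ (hfin i _ hi).toFinset, S j := fun n => by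
    obtain ⟨j, hj⟩ := mem_iUnion.1 (hmem n)
    exact mem_biUnion ((hfin i _ hi).mem_toFinset.2 ⟨f n, hj, hf.antitone n.zero_le⟩) hj
  exact isWF_iff_no_descending_seq.1 ((Finset.wellFoundedOn_bUnion _).2 fun j _ => hS j) f hf hsub

namespace HahnSeries

section OrderedMonoid

variable {Γ R : Type*} [AddCommMonoid Γ] [LinearOrder Γ] [IsOrderedCancelAddMonoid Γ]

theorem existsUnique_eq_add_C_add [Ring R] (F : HahnSeries Γ R) :
    ∃! d : HahnSeries Γ R × R × HahnSeries Γ R,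
      d.1.support ⊆ Iio 0 ∧ d.2.2.support ⊆ Ioi 0 ∧ F = d.1 + C d.2.1 + d.2.2 := by
  classical
  refine ⟨(truncLT 0 F, F.coeff 0, F - truncLT 0 F - C (F.coeff 0)),
    ⟨?_, ?_, by rw [sub_sub, add_sub_cancel]⟩, ?_⟩
  · exact fun a ha => (support_truncLT 0 F ▸ ha).2
  · intro a ha
    by_contra h
    rcases (not_lt.1 h).lt_or_eq with h | rfl
    · simp [coeff_truncLT_of_lt h, C_apply, coeff_single_of_ne h.ne] at ha
    · simp at ha
  · rintro ⟨Fm, c, Fp⟩ ⟨hFm, hFp, rfl⟩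
    have hm (a : Γ) (ha : ¬a < 0) : Fm.coeff a = 0 := Function.notMem_support.1 (ha ∘ (hFm ·))
    have hp (a : Γ) (ha : ¬0 < a) : Fp.coeff a = 0 := Function.notMem_support.1 (ha ∘ (hFp ·))
    have hc : c = (Fm + C c + Fp).coeff 0 := by simp [hm, hp]
    have hFm' : Fm = truncLT 0 (Fm + C c + Fp) := by
      ext a
      by_cases ha : a < 0
      · simp [coeff_truncLT_of_lt ha, C_apply, coeff_single_of_ne ha.ne, hp a (not_lt.2 ha.le)]
      · simp [coeff_truncLT_of_le (not_lt.1 ha), hm a ha]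
    rw [← hc, ← hFm', sub_sub, add_sub_cancel_left]

theorem support_pow_subset_Iio [Semiring R] {x : HahnSeries Γ R} {c : Γ}
    (hx : x.support ⊆ Iio c) {n : ℕ} (hn : 1 ≤ n) : (x ^ n).support ⊆ Iio (n • c) := by
  induction n, hn using Nat.le_induction with
  | base => simpa using hx
  | succ n _ ih =>
    intro _ h
    obtain ⟨a, ha, b, hb, rfl⟩ := support_mul_subset (pow_succ x n ▸ h)
    rw [succ_nsmul]
    exact add_lt_add (ih ha) (hx hb)

theorem support_pow_subset_Ioi [Semiring R] {x : HahnSeries Γ R} {c : Γ}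
    (hx : x.support ⊆ Ioi c) {n : ℕ} (hn : 1 ≤ n) : (x ^ n).support ⊆ Ioi (n • c) := by
  induction n, hn using Nat.le_induction with
  | base => simpa using hx
  | succ n _ ih =>
    intro _ h
    obtain ⟨a, ha, b, hb, rfl⟩ := support_mul_subset (pow_succ x n ▸ h)
    rw [succ_nsmul]
    exact add_lt_add (ih ha) (hx hb)

variable [CommRing R] {p : ℕ} [ExpChar R p]

instance : ExpChar (HahnSeries Γ R) p := expChar_of_injective_ringHom C_injective p

/- Split `x` at `a` into the part below `a`, the monomial at `a` and the part above `a`: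
the `p`-th powers of the outer parts miss the exponent `p • a`. -/
theorem coeff_pow_expChar_nsmul (x : HahnSeries Γ R) (a : Γ) :
    (x ^ p).coeff (p • a) = x.coeff a ^ p := by
  classical
  set y := truncLT a x
  set z := x - y - single a (x.coeff a)
  have hy : y.support ⊆ Iio a := fun b hb => (support_truncLT a x ▸ hb).2
  have hz : z.support ⊆ Ioi a := by
    intro b hb
    by_contra hba
    rcases (not_lt.1 hba).lt_or_eq with h | rfl
    · simp [z, y, coeff_truncLT_of_lt h, coeff_single_of_ne h.ne] at hb
    · simp [z, y] at hb
  have hp : 1 ≤ p := expChar_pos R p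
  have hx : x = y + single a (x.coeff a) + z := by simp only [z]; abel
  conv_lhs => rw [hx]
  rw [add_pow_expChar, add_pow_expChar, coeff_add, coeff_add, single_pow, coeff_single_same,
    Function.notMem_support.1 fun h => (support_pow_subset_Iio hy hp h).false,
    Function.notMem_support.1 fun h => (support_pow_subset_Ioi hz hp h).false]
  simp

end OrderedMonoid

namespace SummableFamily

variable {Γ R ι : Type*} [LinearOrder Γ] [AddCommMonoid R]

def ofLocallyFinite (s : ι → HahnSeries Γ R)
    (hs : ∀ i, ∀ g ∈ (s i).support, {j | ∃ a ∈ (s j).support, a ≤ g}.Finite) :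
    SummableFamily Γ R ι where
  toFun := s
  isPWO_iUnion_support' :=
    (isWF_iUnion_of_finite_setOf_le (fun i => (s i).isWF_support) hs).isPWO
  finite_co_support' g := by
    by_cases h : ∃ i, g ∈ (s i).support
    · obtain ⟨i, hi⟩ := h
      exact (hs i g hi).subset fun j hj => ⟨g, hj, le_rfl⟩
    · simp only [not_exists, mem_support, not_not] at h
      simp [h]

@[simp]
theorem ofLocallyFinite_apply (s : ι → HahnSeries Γ R) (hs) (i : ι) :
    ofLocallyFinite s hs i = s i := rfl

end SummableFamily

section Rat

variable {K : Type*} [Field K] {p : ℕ} [ExpChar K p]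

theorem coeff_pow_expChar (x : HahnSeries ℚ K) (b : ℚ) :
    (x ^ p).coeff b = x.coeff (b / p) ^ p := by
  have hp : (p : ℚ) ≠ 0 := by exact_mod_cast (expChar_pos K p).ne'
  rw [← coeff_pow_expChar_nsmul, nsmul_eq_mul, mul_div_cancel₀ _ hp]

theorem coeff_pow_expChar_pow (x : HahnSeries ℚ K) (n : ℕ) (b : ℚ) :
    (x ^ p ^ n).coeff b = x.coeff (b / p ^ n) ^ p ^ n := by
  induction n generalizing b with
  | zero => simp
  | succ n ih => rw [pow_succ, pow_mul, coeff_pow_expChar, ih, ← pow_mul, div_div, ← pow_succ']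

theorem mem_support_pow_expChar_pow {x : HahnSeries ℚ K} {n : ℕ} {b : ℚ} :
    b ∈ (x ^ p ^ n).support ↔ b / p ^ n ∈ x.support := by
  simp only [mem_support, coeff_pow_expChar_pow, ne_eq,
    pow_eq_zero_iff (expChar_pow_pos K p n).ne']

theorem coeff_hsum_pow_expChar {ι : Type*} (s : SummableFamily ℚ K ι) (b : ℚ) :
    (s.hsum ^ p).coeff b = ∑ᶠ i, (s i ^ p).coeff b := by
  simp only [coeff_pow_expChar, SummableFamily.coeff_hsum]
  exact (frobenius K p).toAddMonoidHom.map_finsum (s.finite_co_support _)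

instance [PerfectRing K p] : PerfectRing (HahnSeries ℚ K) p := by
  have hp : (0 : ℚ) < p := by exact_mod_cast expChar_pos K p
  refine PerfectRing.ofSurjective _ p fun x =>
    ⟨embDomain (OrderIso.divRight₀ _ hp).toOrderEmbedding (x.map (frobeniusEquiv K p).symm),
      ?_⟩
  ext b
  rw [frobenius_def, coeff_pow_expChar,
    show b / p = (OrderIso.divRight₀ _ hp).toOrderEmbedding b from rfl, embDomain_coeff]
  simp

theorem mem_support_frobeniusEquiv_symm_iterate [PerfectRing K p] {x : HahnSeries ℚ K} {n : ℕ}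
    {b : ℚ} : b ∈ ((frobeniusEquiv (HahnSeries ℚ K) p).symm^[n] x).support ↔
      p ^ n * b ∈ x.support := by
  have hp : (p : ℚ) ^ n ≠ 0 := pow_ne_zero n (by exact_mod_cast (expChar_pos K p).ne')
  conv_rhs => rw [← iterate_frobeniusEquiv_symm_pow_p_pow _ p x n]
  rw [mem_support_pow_expChar_pow, mul_div_cancel_left₀ _ hp]

theorem support_finite_coeff_pow_expChar {ι : Type*} (s : SummableFamily ℚ K ι) (b : ℚ) :
    (fun i => (s i ^ p).coeff b).support.Finite := by
  refine (s.finite_co_support (b / p)).subset fun i hi h => hi ?_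
  simp [coeff_pow_expChar, h, zero_pow (expChar_pos K p).ne']

theorem hsum_pow_expChar_of_pow_eq_succ (s : SummableFamily ℚ K ℕ)
    (hs : ∀ j, s j ^ p = s (j + 1)) : s.hsum ^ p = s.hsum - s 0 := by
  ext b
  rw [coeff_hsum_pow_expChar, coeff_sub, SummableFamily.coeff_hsum,
    finsum_nat_eq_add_finsum_succ (s.finite_co_support b)]
  simp [hs]

theorem hsum_pow_expChar_of_pow_succ_eq (s : SummableFamily ℚ K ℕ)
    (hs : ∀ j, s (j + 1) ^ p = s j) : s.hsum ^ p = s 0 ^ p + s.hsum := by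
  ext b
  rw [coeff_hsum_pow_expChar,
    finsum_nat_eq_add_finsum_succ (support_finite_coeff_pow_expChar s b), coeff_add,
    SummableFamily.coeff_hsum]
  simp [hs]

end Rat

section Prime

variable {K : Type*} [Field K] {p : ℕ} [Fact p.Prime] [CharP K p]

theorem exists_pow_sub_self_eq_neg_of_support_subset_Ioi {F : HahnSeries ℚ K}
    (hF : F.support ⊆ Ioi 0) :
    ∃ G : HahnSeries ℚ K, G.support ⊆ Ioi 0 ∧ G ^ p - G = -F := by
  have hp : (1 : ℚ) < p := by exact_mod_cast (Fact.out : p.Prime).one_lt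
  have hp0 : (0 : ℚ) < p := zero_lt_one.trans hp
  let s := SummableFamily.ofLocallyFinite (fun j => F ^ p ^ j) fun i g hg => by
    have hne : F.support.Nonempty := ⟨_, mem_support_pow_expChar_pow.1 hg⟩
    have hm : 0 < F.isWF_support.min hne := hF (F.isWF_support.min_mem hne)
    refine (finite_setOf_pow_le hp (g / F.isWF_support.min hne)).subset ?_
    rintro j ⟨a, ha, hag⟩
    have hmin := F.isWF_support.min_le hne (mem_support_pow_expChar_pow.1 ha)
    rw [mem_ofPred_eq, le_div_iff₀ hm]
    exact ((le_div_iff₀' (by positivity)).1 hmin).trans hag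
  refine ⟨s.hsum, fun b hb => ?_, ?_⟩
  · obtain ⟨_, ⟨j, rfl⟩, hj⟩ := SummableFamily.support_hsum_subset hb
    exact (div_pos_iff_of_pos_right (pow_pos hp0 j)).1 (hF (mem_support_pow_expChar_pow.1 hj))
  · rw [hsum_pow_expChar_of_pow_eq_succ s fun j => by simp [s, ← pow_mul, pow_succ]]
    simp [s]

theorem exists_pow_sub_self_eq_neg_of_support_subset_Iio [PerfectRing K p] {F : HahnSeries ℚ K}
    (hF : F.support ⊆ Iio 0) :
    ∃ G : HahnSeries ℚ K, G.support ⊆ Iio 0 ∧ G ^ p - G = -F := by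
  have hp : (1 : ℚ) < p := by exact_mod_cast (Fact.out : p.Prime).one_lt
  have hp0 : (0 : ℚ) < p := zero_lt_one.trans hp
  let s := SummableFamily.ofLocallyFinite
    (fun j => (frobeniusEquiv (HahnSeries ℚ K) p).symm^[j + 1] F) fun i g hg => by
      have hg' := mem_support_frobeniusEquiv_symm_iterate.1 hg
      have hg0 : g < 0 := neg_of_mul_neg_right (hF hg') (by positivity)
      refine ((finite_setOf_pow_le hp (F.isWF_support.min ⟨_, hg'⟩ / g)).preimage
        Nat.succ_injective.injOn).subset ?_
      rintro j ⟨a, ha, hag⟩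
      rw [mem_preimage, mem_ofPred_eq, le_div_iff_of_neg hg0]
      exact (F.isWF_support.min_le _ (mem_support_frobeniusEquiv_symm_iterate.1 ha)).trans
        (mul_le_mul_of_nonneg_left hag (by positivity))
  refine ⟨-s.hsum, fun b hb => ?_, ?_⟩
  · rw [support_neg] at hb
    obtain ⟨_, ⟨j, rfl⟩, hj⟩ := SummableFamily.support_hsum_subset hb
    exact neg_of_mul_neg_right (mem_Iio.1 (hF (mem_support_frobeniusEquiv_symm_iterate.1 hj)))
      (pow_pos hp0 _).le
  · have hs : s.hsum ^ p = F + s.hsum := by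
      rw [hsum_pow_expChar_of_pow_succ_eq s fun j => ?_]
      · simp [s]
      · simp [s, Function.iterate_succ_apply']
    rw [← frobenius_def, map_neg, frobenius_def, hs]
    abel

theorem exists_eq_C_of_pow_sub_self_eq_C {H : HahnSeries ℚ K} {k : K}
    (hH : H ^ p - H = C k) : ∃ a : K, a ^ p - a = k ∧ H = C a := by
  have hp : (1 : ℚ) < p := by exact_mod_cast (Fact.out : p.Prime).one_lt
  have hp0 : (p : ℚ) ≠ 0 := (zero_lt_one.trans hp).ne'
  have hcoeff (b : ℚ) (hb : b ≠ 0) : H.coeff b = H.coeff (b / p) ^ p := by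
    have := congrArg (coeff · b) hH
    simp only [coeff_sub, coeff_pow_expChar, C_apply, coeff_single_of_ne hb] at this
    exact (sub_eq_zero.1 this).symm
  -- A minimal nonzero exponent `b` would be undercut by `p * b` or `b / p`.
  have hsupp : H.support ⊆ {0} := by
    rw [← sdiff_eq_empty]
    by_contra hne
    have hWF := H.isWF_support.mono (sdiff_subset (t := {0}))
    have hne' := nonempty_iff_ne_empty.2 hne
    obtain ⟨hb, hb0⟩ := hWF.min_mem hne'
    rcases (Ne.lt_or_gt hb0 : hWF.min hne' < 0 ∨ _) with hneg | hpos
    · refine hWF.not_lt_min hne' ⟨?_, mul_ne_zero hp0 hb0⟩ (mul_lt_of_one_lt_left hneg hp)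
      rw [mem_support, hcoeff _ (mul_ne_zero hp0 hb0), mul_div_cancel_left₀ _ hp0]
      exact pow_ne_zero _ hb
    · refine hWF.not_lt_min hne' ⟨fun h => hb ?_, div_ne_zero hb0 hp0⟩ (div_lt_self hpos hp)
      rw [hcoeff _ hb0, h, zero_pow (Fact.out : p.Prime).ne_zero]
  have hHC : H = C (H.coeff 0) := by
    ext b
    by_cases hb : b = 0
    · simp [hb]
    · rw [C_apply, coeff_single_of_ne hb]
      exact Function.notMem_support.1 fun h => hb (hsupp h)
  refine ⟨H.coeff 0, C_injective (Γ := ℚ) ?_, hHC⟩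
  rw [map_sub, map_pow, ← hHC, hH]

theorem pow_sub_self_eq_neg_iff {F Fm Fp Gm Gp : HahnSeries ℚ K} {c : K}
    (hF : F = Fm + C c + Fp) (hGp : Gp ^ p - Gp = -Fp) (hGm : Gm ^ p - Gm = -Fm)
    (G : HahnSeries ℚ K) :
    G ^ p - G = -F ↔ ∃ a : K, a ^ p - a = -c ∧ G = Gp + Gm + C a := by
  constructor
  · intro hG
    obtain ⟨a, ha, hH⟩ := exists_eq_C_of_pow_sub_self_eq_C (H := G - Gp - Gm) (k := -c) (by
      rw [sub_pow_expChar, sub_pow_expChar, map_neg]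
      linear_combination hG - hGp - hGm - hF)
    exact ⟨a, ha, by rw [← hH]; ring⟩
  · rintro ⟨a, ha, rfl⟩
    have hC : (C (a ^ p) - C a : HahnSeries ℚ K) = -C c := by rw [← map_sub, ha, map_neg]
    rw [add_pow_expChar, add_pow_expChar, ← map_pow, hF]
    linear_combination hGp + hGm + hC

end Prime

end HahnSeries

theorem stmt18 (p : ℕ) [Fact p.Prime]
    (F : HahnSeries ℚ (AlgebraicClosure (ZMod p))) :
    (∃! d : HahnSeries ℚ (AlgebraicClosure (ZMod p)) × AlgebraicClosure (ZMod p) ×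
        HahnSeries ℚ (AlgebraicClosure (ZMod p)),
      (∀ α ∈ d.1.support, α < 0) ∧ (∀ α ∈ d.2.2.support, 0 < α) ∧
        F = d.1 + HahnSeries.C d.2.1 + d.2.2) ∧
    ∀ (Fm Fp : HahnSeries ℚ (AlgebraicClosure (ZMod p))) (c : AlgebraicClosure (ZMod p)),
      (∀ α ∈ Fm.support, α < 0) → (∀ α ∈ Fp.support, 0 < α) →
      F = Fm + HahnSeries.C c + Fp →
      ∃ Gp Gm : HahnSeries ℚ (AlgebraicClosure (ZMod p)),
        (∀ α ∈ Gp.support, 0 < α) ∧ Gp ^ p - Gp = -Fp ∧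
        (∀ α ∈ Gm.support, α < 0) ∧ Gm ^ p - Gm = -Fm ∧
        ∀ G : HahnSeries ℚ (AlgebraicClosure (ZMod p)),
          G ^ p - G = -F ↔
            ∃ (a : AlgebraicClosure (ZMod p)) (i : ZMod p),
              a ^ p - a = -c ∧
              G = Gp + Gm +
                HahnSeries.C (a + algebraMap (ZMod p) (AlgebraicClosure (ZMod p)) i) := by
  refine ⟨existsUnique_eq_add_C_add F, fun Fm Fp c hFm hFp hF => ?_⟩
  obtain ⟨Gp, hGp_supp, hGp⟩ := exists_pow_sub_self_eq_neg_of_support_subset_Ioi (p := p) hFp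
  obtain ⟨Gm, hGm_supp, hGm⟩ := exists_pow_sub_self_eq_neg_of_support_subset_Iio (p := p) hFm
  refine ⟨Gp, Gm, hGp_supp, hGp, hGm_supp, hGm, fun G => ?_⟩
  rw [pow_sub_self_eq_neg_iff hF hGp hGm]
  constructor
  · rintro ⟨a, ha, rfl⟩
    exact ⟨a, 0, ha, by simp⟩
  · rintro ⟨a, i, ha, rfl⟩
    refine ⟨_, ?_, rfl⟩
    rw [add_pow_char, ← map_pow, ZMod.pow_card]
    linear_combination ha
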